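/- Let g₀ = 0 and define recursively g_k(z) = [[z, z_{n+1−k}]·g_{k−1}(z), Δ^{n−k}_{n+1−k}] for k = 1, …, n, where z₁, …, z_n ∈ D are distinct and the Δ^k_j are the hyperbolic difference quotients of given data (w_j) with all |Δ^k_j| < 1. Then each g_k is an analytic self-map of D and g_n(z_j) = w_j for j = 1, …, n. -/

import Mathlib

open Complex Set ComplexConjugate

noncomputable section

/-- The open unit disc in ℂ. -/
def unitDisc : Set ℂ := {z : ℂ | ‖z‖ < 1}

/-- Pseudohyperbolic distance ρ(a,b) = |(a-b)/(1 - conj b · a)|. -/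
def pd (a b : ℂ) : ℝ := ‖(a - b) / (1 - conj b * a)‖

/-- Hyperbolic distance β = log((1+ρ)/(1-ρ)). -/
def hd (a b : ℂ) : ℝ := Real.log ((1 + pd a b) / (1 - pd a b))

/-- The complex pseudohyperbolic "bracket" [a,b] = (b-a)/(1 - conj b · a). -/
def hbr (a b : ℂ) : ℂ := (b - a) / (1 - conj b * a)

/-- f is an analytic self-map of the unit disc. -/
def IsSelfMap (f : ℂ → ℂ) : Prop :=
  DifferentiableOn ℂ f unitDisc ∧ Set.MapsTo f unitDisc unitDisc

/-- Hyperbolic derivative f^h(z) = (1-|z|²) f'(z) / (1-|f z|²). -/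
def hypDeriv (f : ℂ → ℂ) (z : ℂ) : ℂ :=
  (1 - (‖z‖ : ℂ) ^ 2) * deriv f z / (1 - (‖f z‖ : ℂ) ^ 2)

/-- The triangle of hyperbolic difference quotients:
`hdq z w 0 j = w j` and `Δ^{k+1}_j = [Δ^k_j, Δ^k_{k+1}]/[z_j, z_{k+1}]`
(points indexed starting at 1, so `Δ^k` involves the point `z_k`). -/
def hdq (z w : ℕ → ℂ) : ℕ → ℕ → ℂ
  | 0, j => w j
  | k + 1, j => hbr (hdq z w k j) (hdq z w k (k + 1)) / hbr (z j) (z (k + 1))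

/-!
The step `G ↦ [[ζ, z_{m+1}] · G, Δ^m_{m+1}]` inverts the recursion defining `Δ^{m+1}`, because
`[·, c]` is an involutive automorphism of the disc for `|c| < 1`: it sends a function interpolating
`Δ^{m+1}_j` at `z_{m+2}, …, z_n` to one interpolating `Δ^m_j` at `z_{m+1}, …, z_n` (at `z_{m+1}`
the product vanishes and `[0, c] = c`), and it keeps analytic self-maps of the disc self-maps.
By induction, `g_k` interpolates `Δ^{n-k}` at the last `k` nodes.
-/

lemma one_sub_conj_mul_ne_zero {a c : ℂ} (ha : ‖a‖ < 1) (hc : ‖c‖ < 1) :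
    1 - conj c * a ≠ 0 := by
  have hlt : ‖conj c * a‖ < 1 := by
    rw [norm_mul, Complex.norm_conj]
    nlinarith [norm_nonneg a, norm_nonneg c]
  intro h
  rw [← sub_eq_zero.mp h, norm_one] at hlt
  exact hlt.false

lemma normSq_one_sub_conj_mul_sub_normSq_sub (a c : ℂ) :
    normSq (1 - conj c * a) - normSq (c - a) = (1 - normSq c) * (1 - normSq a) := by
  simp only [normSq_apply, sub_re, sub_im, mul_re, mul_im, one_re, one_im, conj_re, conj_im]
  ring

lemma norm_hbr_lt_one {a c : ℂ} (ha : ‖a‖ < 1) (hc : ‖c‖ < 1) : ‖hbr a c‖ < 1 := by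
  have hden := one_sub_conj_mul_ne_zero ha hc
  rw [hbr, norm_div, div_lt_one (norm_pos_iff.mpr hden), ← sq_lt_sq₀ (norm_nonneg _)
    (norm_nonneg _), Complex.sq_norm, Complex.sq_norm, ← sub_pos,
    normSq_one_sub_conj_mul_sub_normSq_sub]
  have hc2 : normSq c < 1 := by rw [← Complex.sq_norm]; nlinarith [norm_nonneg c]
  have ha2 : normSq a < 1 := by rw [← Complex.sq_norm]; nlinarith [norm_nonneg a]
  exact mul_pos (sub_pos.mpr hc2) (sub_pos.mpr ha2)

lemma hbr_self (a : ℂ) : hbr a a = 0 := by simp [hbr]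

lemma hbr_zero_left (c : ℂ) : hbr 0 c = c := by simp [hbr]

lemma hbr_ne_zero {a c : ℂ} (ha : ‖a‖ < 1) (hc : ‖c‖ < 1) (hac : a ≠ c) : hbr a c ≠ 0 :=
  div_ne_zero (sub_ne_zero.mpr hac.symm) (one_sub_conj_mul_ne_zero ha hc)

lemma hbr_hbr_right {a c : ℂ} (ha : ‖a‖ < 1) (hc : ‖c‖ < 1) : hbr (hbr a c) c = a := by
  have hden := one_sub_conj_mul_ne_zero ha hc
  have hcc := one_sub_conj_mul_ne_zero hc hc
  have hnum : c - (c - a) / (1 - conj c * a) = a * (1 - conj c * c) / (1 - conj c * a) := by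
    rw [eq_div_iff hden, sub_mul, div_mul_cancel₀ _ hden]
    ring
  have hden' : 1 - conj c * ((c - a) / (1 - conj c * a)) =
      (1 - conj c * c) / (1 - conj c * a) := by
    field_simp
    ring
  rw [hbr, hbr, hnum, hden', mul_div_assoc, mul_div_cancel_right₀ a (div_ne_zero hcc hden)]

lemma DifferentiableOn.hbr_const {f : ℂ → ℂ} {s : Set ℂ} {c : ℂ}
    (hf : DifferentiableOn ℂ f s) (hden : ∀ ζ ∈ s, 1 - conj c * f ζ ≠ 0) :
    DifferentiableOn ℂ (fun ζ => hbr (f ζ) c) s :=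
  ((differentiableOn_const c).sub hf).div
    ((differentiableOn_const 1).sub ((differentiableOn_const (conj c)).mul hf)) hden

lemma IsSelfMap.hbr_hbr_mul {G : ℂ → ℂ} (hG : IsSelfMap G) {b c : ℂ} (hb : ‖b‖ < 1)
    (hc : ‖c‖ < 1) : IsSelfMap (fun ζ => hbr (hbr ζ b * G ζ) c) := by
  have hmaps : ∀ ζ ∈ unitDisc, ‖hbr ζ b * G ζ‖ < 1 := fun ζ hζ => by
    rw [norm_mul]
    exact mul_lt_one_of_nonneg_of_lt_one_left (norm_nonneg _) (norm_hbr_lt_one hζ hb)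
      (hG.2 hζ).le
  have hdiff : DifferentiableOn ℂ (fun ζ => hbr ζ b * G ζ) unitDisc :=
    (differentiableOn_id.hbr_const fun ζ hζ => one_sub_conj_mul_ne_zero hζ hb).mul hG.1
  exact ⟨hdiff.hbr_const fun ζ hζ => one_sub_conj_mul_ne_zero (hmaps ζ hζ) hc,
    fun ζ hζ => norm_hbr_lt_one (hmaps ζ hζ) hc⟩

lemma hbr_hbr_mul_hdq_succ {z w : ℕ → ℂ} {m j : ℕ} (hzj : ‖z j‖ < 1) (hzm : ‖z (m + 1)‖ < 1)
    (hne : z j ≠ z (m + 1)) (hj : ‖hdq z w m j‖ < 1) (hm : ‖hdq z w m (m + 1)‖ < 1) :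
    hbr (hbr (z j) (z (m + 1)) * hdq z w (m + 1) j) (hdq z w m (m + 1)) = hdq z w m j := by
  rw [hdq, mul_div_cancel₀ _ (hbr_ne_zero hzj hzm hne), hbr_hbr_right hj hm]

lemma schur_iterate_isSelfMap_and_interpolates {n : ℕ} {z w : ℕ → ℂ}
    (hzD : ∀ j, 1 ≤ j → j ≤ n → z j ∈ unitDisc)
    (hdist : ∀ i j, 1 ≤ i → i ≤ n → 1 ≤ j → j ≤ n → i ≠ j → z i ≠ z j)
    (hΔ : ∀ k j, k ≤ n - 1 → k + 1 ≤ j → j ≤ n → ‖hdq z w k j‖ < 1)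
    {g : ℕ → ℂ → ℂ} (hg0 : ∀ ζ, g 0 ζ = 0)
    (hgk : ∀ k, 1 ≤ k → k ≤ n → ∀ ζ,
      g k ζ = hbr (hbr ζ (z (n + 1 - k)) * g (k - 1) ζ) (hdq z w (n - k) (n + 1 - k))) :
    ∀ k ≤ n, IsSelfMap (g k) ∧ ∀ j, n + 1 - k ≤ j → j ≤ n → g k (z j) = hdq z w (n - k) j := by
  intro k
  induction k with
  | zero =>
    refine fun _ => ⟨?_, fun j hj hjn => by omega⟩
    rw [show g 0 = fun _ => 0 from funext hg0]
    exact ⟨differentiableOn_const 0, fun _ _ => by simp [unitDisc]⟩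
  | succ k ih =>
    intro hk
    obtain ⟨hself, hinterp⟩ := ih (by omega)
    obtain ⟨m, hm, hm1⟩ : ∃ m, n - (k + 1) = m ∧ n - k = m + 1 := ⟨_, rfl, by omega⟩
    have hstep : ∀ ζ, g (k + 1) ζ = hbr (hbr ζ (z (m + 1)) * g k ζ) (hdq z w m (m + 1)) := by
      intro ζ
      rw [hgk (k + 1) (by omega) hk ζ, show n + 1 - (k + 1) = m + 1 by omega, hm,
        Nat.add_sub_cancel]
    have hzm : ‖z (m + 1)‖ < 1 := hzD (m + 1) (by omega) (by omega)
    have hΔm : ‖hdq z w m (m + 1)‖ < 1 := hΔ m (m + 1) (by omega) le_rfl (by omega)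
    refine ⟨funext hstep ▸ hself.hbr_hbr_mul hzm hΔm, fun j hj hjn => ?_⟩
    rw [hstep, hm]
    rcases (show j = m + 1 ∨ m + 2 ≤ j by omega) with rfl | hjm
    · rw [hbr_self, zero_mul, hbr_zero_left]
    · rw [hinterp j (by omega) hjn, hm1]
      exact hbr_hbr_mul_hdq_succ (hzD j (by omega) hjn) hzm
        (hdist j (m + 1) (by omega) hjn (by omega) (by omega) (by omega))
        (hΔ m j (by omega) (by omega) hjn) hΔm

theorem schur_algorithm_interpolation_general
    (n : ℕ) (z w : ℕ → ℂ)
    (hzD : ∀ j, 1 ≤ j → j ≤ n → z j ∈ unitDisc)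
    (hdist : ∀ i j, 1 ≤ i → i ≤ n → 1 ≤ j → j ≤ n → i ≠ j → z i ≠ z j)
    (hΔ : ∀ k j, k ≤ n - 1 → k + 1 ≤ j → j ≤ n → ‖hdq z w k j‖ < 1)
    (g : ℕ → ℂ → ℂ)
    (hg0 : ∀ ζ, g 0 ζ = 0)
    (hgk : ∀ k, 1 ≤ k → k ≤ n → ∀ ζ,
      g k ζ = hbr (hbr ζ (z (n + 1 - k)) * g (k - 1) ζ) (hdq z w (n - k) (n + 1 - k))) :
    (∀ k, k ≤ n → IsSelfMap (g k)) ∧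
    (∀ j, 1 ≤ j → j ≤ n → g n (z j) = w j) := by
  have key := schur_iterate_isSelfMap_and_interpolates hzD hdist hΔ hg0 hgk
  refine ⟨fun k hk => (key k hk).1, fun j hj hjn => ?_⟩
  simpa [hdq] using (key n le_rfl).2 j (by omega) hjn

theorem schur_algorithm_interpolation
    (n : ℕ) (hn : 1 ≤ n) (z w : ℕ → ℂ)
    (hzD : ∀ j, 1 ≤ j → j ≤ n → z j ∈ unitDisc)
    (hdist : ∀ i j, 1 ≤ i → i ≤ n → 1 ≤ j → j ≤ n → i ≠ j → z i ≠ z j)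
    (hΔ : ∀ k j, k ≤ n - 1 → k + 1 ≤ j → j ≤ n → ‖hdq z w k j‖ < 1)
    (g : ℕ → ℂ → ℂ)
    (hg0 : ∀ ζ, g 0 ζ = 0)
    (hgk : ∀ k, 1 ≤ k → k ≤ n → ∀ ζ,
      g k ζ = hbr (hbr ζ (z (n + 1 - k)) * g (k - 1) ζ) (hdq z w (n - k) (n + 1 - k))) :
    (∀ k, k ≤ n → IsSelfMap (g k)) ∧
    (∀ j, 1 ≤ j → j ≤ n → g n (z j) = w j) :=
  schur_algorithm_interpolation_general n z w hzD hdist hΔ g hg0 hgk
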